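/- Suppose v : ℝ → ℝ is differentiable, solves v'(χ) = w(v(χ))/r'(v(χ)) where it makes sense, is increasing, and passes through the sonic point v_s with v'(χ_s) > 0, where w(v_s) = 0 and r'(v_s) = 0. If w'(v_s) and r''(v_s) exist with r''(v_s) ≠ 0, then by L'Hôpital-type reasoning (v'(χ_s))² = w'(v_s)·v'(χ_s)/r''(v_s), hence w'(v_s)/r''(v_s) > 0. -/
import Mathlib

open Filter Set Topology

/-- L'Hôpital-type relation at the sonic point for the jamiton ODE
`v' = w(v)/r'(v)`: if the increasing solution passes through the sonic point with
positive derivative, then `(v'(χ_s))² = w'(v_s) v'(χ_s) / r''(v_s)`, hence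
`w'(v_s)/r''(v_s) > 0`. -/
theorem sonic_point_lhopital (v w r : ℝ → ℝ) (χs vs : ℝ)
    (hv : Differentiable ℝ v)
    (hODE : ∀ χ, deriv r (v χ) ≠ 0 → deriv v χ = w (v χ) / deriv r (v χ))
    (hmono : StrictMono v)
    (hvs : v χs = vs) (hpos : 0 < deriv v χs)
    (hw : w vs = 0) (hr' : deriv r vs = 0)
    (hw' : DifferentiableAt ℝ w vs) (hr'' : DifferentiableAt ℝ (deriv r) vs)
    (hr''ne : deriv (deriv r) vs ≠ 0) :
    (deriv v χs) ^ 2 = deriv w vs * deriv v χs / deriv (deriv r) vs ∧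
      0 < deriv w vs / deriv (deriv r) vs := by
  set d := deriv v χs with hd
  set L := deriv w vs / deriv (deriv r) vs with hL
  -- composite functions
  set F : ℝ → ℝ := fun χ => w (v χ) with hFdef
  set G : ℝ → ℝ := fun χ => deriv r (v χ) with hGdef
  have hF0 : F χs = 0 := by simp [hFdef, hvs, hw]
  have hG0 : G χs = 0 := by simp [hGdef, hvs, hr']
  have hvχ : HasDerivAt v d χs := (hv χs).hasDerivAt
  have hwv : HasDerivAt w (deriv w vs) (v χs) := by rw [hvs]; exact hw'.hasDerivAt
  have hrv : HasDerivAt (deriv r) (deriv (deriv r) vs) (v χs) := by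
    rw [hvs]; exact hr''.hasDerivAt
  have hF : HasDerivAt F (deriv w vs * d) χs := hwv.comp χs hvχ
  have hG : HasDerivAt G (deriv (deriv r) vs * d) χs := hrv.comp χs hvχ
  have hGd : deriv (deriv r) vs * d ≠ 0 := mul_ne_zero hr''ne hpos.ne'
  have slopeF : Tendsto (slope F χs) (𝓝[≠] χs) (𝓝 (deriv w vs * d)) :=
    hasDerivAt_iff_tendsto_slope.mp hF
  have slopeG : Tendsto (slope G χs) (𝓝[≠] χs) (𝓝 (deriv (deriv r) vs * d)) :=
    hasDerivAt_iff_tendsto_slope.mp hG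
  have Tratio : Tendsto (fun x => slope F χs x / slope G χs x) (𝓝[≠] χs) (𝓝 L) := by
    have := slopeF.div slopeG hGd
    have hLeq : deriv w vs * d / (deriv (deriv r) vs * d) = L := by
      rw [hL, mul_div_mul_right _ _ hpos.ne']
    rwa [hLeq] at this
  -- eventually deriv v = ratio of slopes
  have hev : ∀ᶠ x in (𝓝[≠] χs), deriv v x = slope F χs x / slope G χs x := by
    have hne : ∀ᶠ x in (𝓝[≠] χs), slope G χs x ≠ 0 := slopeG.eventually_ne hGd
    filter_upwards [hne, self_mem_nhdsWithin] with x hGne (hx : x ≠ χs)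
    have hxne : x - χs ≠ 0 := sub_ne_zero.mpr hx
    have hGx : G x ≠ 0 := by
      intro h
      apply hGne
      rw [slope_def_field, hG0, h]
      simp
    have hode := hODE x hGx
    rw [hode, slope_def_field, slope_def_field, hF0, hG0, sub_zero, sub_zero]
    simp only [hFdef, hGdef] at hGx ⊢
    field_simp
  have hev' : (fun x => slope F χs x / slope G χs x) =ᶠ[𝓝[≠] χs] deriv v := by
    filter_upwards [hev] with x h; exact h.symm
  have Tderiv : Tendsto (deriv v) (𝓝[≠] χs) (𝓝 L) := Tendsto.congr' hev' Tratio
  -- deriv v χs = L via one-sided extension lemmas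
  have hIci : HasDerivWithinAt v L (Ici χs) χs := by
    apply hasDerivWithinAt_Ici_of_tendsto_deriv (s := Ioi χs)
      (hv.differentiableOn) (hv.continuous.continuousWithinAt) self_mem_nhdsWithin
    exact Tderiv.mono_left (nhdsWithin_mono _ fun x hx => ne_of_gt hx)
  have hIic : HasDerivWithinAt v L (Iic χs) χs := by
    apply hasDerivWithinAt_Iic_of_tendsto_deriv (s := Iio χs)
      (hv.differentiableOn) (hv.continuous.continuousWithinAt) self_mem_nhdsWithin
    exact Tderiv.mono_left (nhdsWithin_mono _ fun x hx => ne_of_lt hx)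
  have hL' : HasDerivAt v L χs := by
    have := hIci.union hIic
    rw [show Ici χs ∪ Iic χs = Set.univ from by ext x; simp [le_total],
      hasDerivWithinAt_univ] at this
    exact this
  have hdL : d = L := hL'.deriv
  constructor
  · rw [sq, hdL, hL]
    ring
  · show 0 < L
    rw [← hdL]; exact hpos
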